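/- arXiv:2212.05095 — 6 statements merged into one kernel-verified Lean document; each statement's English description precedes it below -/
import Mathlib

section
/- If the pair (X,J) has the QLP, then (X,J) has the compact quotient lifting property (CQLP): every compact operator into X/J lifts to a compact operator into X with the same norm. -/
open scoped ENNReal Pointwise
open TopologicalSpace in
/-- The range of a compact operator is separable. -/
lemma aux_isSeparable_range {Z E : Type*} [NormedAddCommGroup Z] [NormedSpace ℝ Z]
    [SeminormedAddCommGroup E] [NormedSpace ℝ E] {T : Z →L[ℝ] E}
    (hT : IsCompactOperator T) : IsSeparable (Set.range T) := by
  obtain ⟨K, hK, hKmem⟩ := hT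
  obtain ⟨r, hr, hball⟩ := Metric.mem_nhds_iff.1 hKmem
  have hsep : IsSeparable (⋃ q : ℚ, (q : ℝ) • K) :=
    .iUnion fun q => (hK.image (continuous_const_smul _)).isSeparable
  refine hsep.closure.mono ?_
  rintro - ⟨z, rfl⟩
  set c : ℝ := ‖z‖ / r + 1 with hc
  have hc0 : 0 < c := by positivity
  have hz : c⁻¹ • z ∈ Metric.ball (0 : Z) r := by
    simp only [Metric.mem_ball, dist_zero_right, norm_smul, norm_inv, Real.norm_eq_abs,
      abs_of_pos hc0]
    rw [inv_mul_lt_iff₀ hc0, hc]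
    have : (‖z‖ / r + 1) * r = ‖z‖ + r := by field_simp
    rw [this]; linarith
  have hk : T (c⁻¹ • z) ∈ K := hball hz
  have hTz : T z = c • T (c⁻¹ • z) := by
    rw [← map_smul, smul_inv_smul₀ hc0.ne']
  rw [hTz]
  set k := T (c⁻¹ • z)
  rw [Metric.mem_closure_iff]
  intro ε hε
  obtain ⟨q, hq⟩ := exists_rat_near c (show (0:ℝ) < ε / (‖k‖ + 1) by positivity)
  refine ⟨(q : ℝ) • k, Set.mem_iUnion.2 ⟨q, Set.smul_mem_smul_set hk⟩, ?_⟩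
  rw [dist_eq_norm, ← sub_smul, norm_smul, Real.norm_eq_abs]
  calc |c - q| * ‖k‖ ≤ |c - q| * (‖k‖ + 1) := by
        gcongr; linarith [norm_nonneg k]
    _ < ε / (‖k‖ + 1) * (‖k‖ + 1) := by
        have h1 : (0:ℝ) < ‖k‖ + 1 := by positivity
        gcongr
    _ = ε := by field_simp

/-- A separable normed space embeds linearly isometrically into `ℓ^∞(ℕ)`. -/
lemma aux_exists_embed (N : Type*) [NormedAddCommGroup N] [NormedSpace ℝ N]
    [TopologicalSpace.SeparableSpace N] :
    Nonempty (N →ₗᵢ[ℝ] lp (fun _ : ℕ => ℝ) ∞) := by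
  have : Nonempty N := ⟨0⟩
  obtain ⟨u, hu⟩ := TopologicalSpace.exists_dense_seq N
  choose g hg1 hg2 using fun n => exists_dual_vector'' ℝ (u n)
  have hbound : ∀ (x : N) (n : ℕ), ‖g n x‖ ≤ ‖x‖ := fun x n =>
    calc ‖g n x‖ ≤ ‖g n‖ * ‖x‖ := (g n).le_opNorm x
      _ ≤ 1 * ‖x‖ := by gcongr; exact hg1 n
      _ = ‖x‖ := one_mul _
  have hbd : ∀ x : N, Memℓp (fun n => g n x) ∞ := fun x =>
    memℓp_infty ⟨‖x‖, by rintro - ⟨n, rfl⟩; exact hbound x n⟩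
  refine ⟨⟨⟨⟨fun x => ⟨fun n => g n x, hbd x⟩, fun x y => ?_⟩, fun c x => ?_⟩, fun x => ?_⟩⟩
  · apply lp.ext
    rw [lp.coeFn_add]
    funext n
    exact map_add (g n) x y
  · apply lp.ext
    rw [lp.coeFn_smul]
    funext n
    exact map_smul (g n) c x
  · set f : lp (fun _ : ℕ => ℝ) ∞ := ⟨fun n => g n x, hbd x⟩ with hf
    refine le_antisymm (lp.norm_le_of_forall_le (norm_nonneg x) fun n => hbound x n) ?_
    refine le_of_forall_pos_le_add fun ε hε => ?_
    obtain ⟨n, hn⟩ := Metric.denseRange_iff.1 hu x (ε / 2) (by positivity)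
    have h1 : ‖x‖ ≤ ‖u n‖ + ‖x - u n‖ := by
      have := norm_sub_norm_le x (u n)
      linarith
    have h2 : g n (u n) = g n x + g n (u n - x) := by
      rw [← map_add]; congr 1; abel
    have h3 : g n x ≤ ‖f‖ := by
      calc g n x ≤ ‖g n x‖ := le_abs_self _
        _ = ‖f n‖ := rfl
        _ ≤ ‖f‖ := lp.norm_apply_le_norm ENNReal.top_ne_zero f n
    have h4 : g n (u n - x) ≤ ‖u n - x‖ :=
      (le_abs_self _).trans (hbound (u n - x) n)
    have h5 : ‖u n - x‖ = dist x (u n) := by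
      rw [dist_eq_norm, ← norm_neg]; congr 1; abel
    have h6 : ‖x - u n‖ = dist x (u n) := by rw [dist_eq_norm]
    calc ‖x‖ ≤ ‖u n‖ + ‖x - u n‖ := h1
      _ = g n (u n) + ‖x - u n‖ := by have := hg2 n; simp only [this]; norm_num
      _ = g n x + g n (u n - x) + ‖x - u n‖ := by rw [h2]
      _ ≤ ‖f‖ + dist x (u n) + dist x (u n) := by
          rw [h6]; have := h4; rw [h5] at this; linarith [h3]
      _ ≤ ‖f‖ + ε / 2 + ε / 2 := by linarith
      _ = ‖f‖ + ε := by ring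

set_option maxHeartbeats 1000000 in
/-- If the pair (X,J) has the QLP, then (X,J) has the compact quotient lifting
property (CQLP): every compact operator into X/J lifts to a compact operator into X with the
same norm. -/
theorem stmt_1 (X : Type*) [NormedAddCommGroup X] [NormedSpace ℝ X] [CompleteSpace X]
    (J : Submodule ℝ X) (hJ : IsClosed (J : Set X))
    (hQLP : ∀ (Y : Type) [NormedAddCommGroup Y] [NormedSpace ℝ Y] [CompleteSpace Y]
      (S : Y →L[ℝ] X ⧸ J), ∃ T : Y →L[ℝ] X,
        (∀ y : Y, (Submodule.Quotient.mk (T y) : X ⧸ J) = S y) ∧ ‖T‖ = ‖S‖) :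
    ∀ (Z : Type) [NormedAddCommGroup Z] [NormedSpace ℝ Z] [CompleteSpace Z]
      (T : Z →L[ℝ] X ⧸ J), IsCompactOperator T → ∃ S : Z →L[ℝ] X, IsCompactOperator S ∧
        (∀ z : Z, (Submodule.Quotient.mk (S z) : X ⧸ J) = T z) ∧ ‖S‖ = ‖T‖ := by
  intro Z _ _ _ T hT
  -- the closed separable subspace generated by the range of `T`
  set Nsub : Submodule ℝ (X ⧸ J) := (Submodule.span ℝ (Set.range T)).topologicalClosure with hNsub
  have hNclosed : IsClosed (Nsub : Set (X ⧸ J)) := Submodule.isClosed_topologicalClosure _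
  haveI : CompleteSpace Nsub := hNclosed.completeSpace_coe
  haveI hNsep : TopologicalSpace.SeparableSpace Nsub := by
    have h1 : TopologicalSpace.IsSeparable (Set.range T) := aux_isSeparable_range hT
    have h2 := (h1.span (R := ℝ)).closure
    have h3 : (Nsub : Set (X ⧸ J)) = closure (Submodule.span ℝ (Set.range T) : Set (X ⧸ J)) :=
      Submodule.topologicalClosure_coe _
    rw [← h3] at h2
    exact h2.separableSpace
  obtain ⟨φ⟩ := aux_exists_embed Nsub
  -- the range of the embedding, a Banach space in `Type 0`
  set M : Submodule ℝ (lp (fun _ : ℕ => ℝ) ∞) := LinearMap.range φ.toLinearMap with hM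
  have hMclosed : IsClosed (M : Set (lp (fun _ : ℕ => ℝ) ∞)) := by
    have h := φ.isometry.isClosedEmbedding.isClosed_range
    have : (M : Set (lp (fun _ : ℕ => ℝ) ∞)) = Set.range φ := by
      ext y; simp only [hM, LinearMap.mem_range, Set.mem_range]; rfl
    rwa [this]
  haveI : CompleteSpace M := hMclosed.completeSpace_coe
  set e : Nsub ≃ₗᵢ[ℝ] M := φ.equivRange with he
  -- lift the inverse embedding via QLP
  set S0 : M →L[ℝ] X ⧸ J :=
    Nsub.subtypeL.comp e.symm.toLinearIsometry.toContinuousLinearMap with hS0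
  have hS0norm : ∀ m : M, ‖S0 m‖ = ‖m‖ := fun m => by
    simp only [hS0, ContinuousLinearMap.comp_apply]
    rw [show ‖Nsub.subtypeL (e.symm.toLinearIsometry.toContinuousLinearMap m)‖
        = ‖e.symm.toLinearIsometry.toContinuousLinearMap m‖ from rfl]
    exact e.symm.norm_map m
  obtain ⟨L, hL, hLnorm⟩ := hQLP M S0
  have hLle : ‖L‖ ≤ 1 := by
    rw [hLnorm]
    exact ContinuousLinearMap.opNorm_le_bound _ zero_le_one fun m => by
      rw [hS0norm m, one_mul]
  -- corestriction of `T`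
  have hmem : ∀ z : Z, T z ∈ Nsub := fun z =>
    Submodule.le_topologicalClosure _ (Submodule.subset_span ⟨z, rfl⟩)
  set Tc : Z →L[ℝ] Nsub := T.codRestrict Nsub hmem with hTc
  set φc : Nsub →L[ℝ] M := e.toLinearIsometry.toContinuousLinearMap with hφc
  refine ⟨L.comp (φc.comp Tc), ?_, ?_, ?_⟩
  · -- compactness
    have hTcc : IsCompactOperator Tc := hT.codRestrict hmem hNclosed
    have : IsCompactOperator ((⇑(L.comp φc)) ∘ ⇑Tc) :=
      hTcc.continuous_comp (L.comp φc).continuous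
    exact this
  · -- lifting property
    intro z
    have h1 : (L.comp (φc.comp Tc)) z = L (φc (Tc z)) := rfl
    rw [h1, hL (φc (Tc z))]
    have h2 : S0 (φc (Tc z)) = ((e.symm (e (Tc z)) : Nsub) : X ⧸ J) := rfl
    rw [h2, e.symm_apply_apply]
    rfl
  · -- norms
    refine le_antisymm ?_ ?_
    · refine ContinuousLinearMap.opNorm_le_bound _ (norm_nonneg T) fun z => ?_
      have h1 : ‖(L.comp (φc.comp Tc)) z‖ = ‖L (φc (Tc z))‖ := rfl
      have h2 : ‖φc (Tc z)‖ = ‖T z‖ := by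
        rw [show φc (Tc z) = e (Tc z) from rfl, e.norm_map]
        rfl
      calc ‖(L.comp (φc.comp Tc)) z‖ = ‖L (φc (Tc z))‖ := h1
        _ ≤ ‖L‖ * ‖φc (Tc z)‖ := L.le_opNorm _
        _ ≤ 1 * ‖T z‖ := by rw [h2]; gcongr
        _ = ‖T z‖ := one_mul _
        _ ≤ ‖T‖ * ‖z‖ := T.le_opNorm z
    · refine ContinuousLinearMap.opNorm_le_bound _ (norm_nonneg _) fun z => ?_
      have hmk : (Submodule.Quotient.mk ((L.comp (φc.comp Tc)) z) : X ⧸ J) = T z := by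
        have h1 : (L.comp (φc.comp Tc)) z = L (φc (Tc z)) := rfl
        rw [h1, hL (φc (Tc z))]
        have h2 : S0 (φc (Tc z)) = ((e.symm (e (Tc z)) : Nsub) : X ⧸ J) := rfl
        rw [h2, e.symm_apply_apply]
        rfl
      calc ‖T z‖ = ‖(Submodule.Quotient.mk ((L.comp (φc.comp Tc)) z) : X ⧸ J)‖ := by rw [hmk]
        _ ≤ ‖(L.comp (φc.comp Tc)) z‖ := Submodule.Quotient.norm_mk_le _ _
        _ ≤ ‖L.comp (φc.comp Tc)‖ * ‖z‖ := (L.comp (φc.comp Tc)).le_opNorm z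
end

section
/- Let Ω be a compact metric space (so that Dugundji's extension theorem applies), E ⊂ Ω a closed set, and J = {f ∈ C(Ω): f|E = 0}. Then (C(Ω), J) has the CQLP: every compact operator T: Z → C(Ω)/J from a Banach space Z lifts to a compact operator S: Z → C(Ω) with π∘S = T and ‖S‖ = ‖T‖. -/
/-!
Fix a dense sequence `a n` in `E`. For `x ∉ E`, extend `g ∈ C(E)` by the average of the values
`g (a n)` over those `n` with `d(x, a n) < 2 d(x, E)`, weighted by `2⁻ⁿ` times a cutoff that
vanishes outside that range. Such an average is linear in `g` and bounded by `‖g‖`; as `x → x₀ ∈ E`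
the contributing `a n` lie within `3 d(x, x₀)` of `x₀`, which gives continuity (Dugundji).
Extension after restriction is then a norm-one projection `P` of `C(Ω)` with kernel `J`; it descends
to a norm-one right inverse `σ` of the quotient map, and `σ ∘ T` lifts `T` with the same norm and
is compact because `T` is.
-/

/-- The subspace of continuous functions vanishing on a set `E`. -/
def vanishingIdeal (Ω : Type*) [TopologicalSpace Ω] (E : Set Ω) :
    Submodule ℝ C(Ω, ℝ) where
  carrier := {f | ∀ x ∈ E, f x = 0}
  add_mem' := by intro f g hf hg x hx; simp [hf x hx, hg x hx]
  zero_mem' := by intro x hx; simp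
  smul_mem' := by intro c f hf x hx; simp [hf x hx]

/-- The pair (X,J) has the compact quotient lifting property (CQLP): every compact operator
from a Banach space into X/J lifts to a compact operator into X with the same norm. -/
def HasCQLP (X : Type*) [NormedAddCommGroup X] [NormedSpace ℝ X] (J : Submodule ℝ X) : Prop :=
  ∀ (Z : Type) [NormedAddCommGroup Z] [NormedSpace ℝ Z] [CompleteSpace Z]
    (T : Z →L[ℝ] X ⧸ J), IsCompactOperator T → ∃ S : Z →L[ℝ] X, IsCompactOperator S ∧
      (∀ z : Z, (Submodule.Quotient.mk (S z) : X ⧸ J) = T z) ∧ ‖S‖ = ‖T‖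

theorem Submodule.norm_liftQL_le {𝕜 X Y : Type*} [NontriviallyNormedField 𝕜]
    [NormedAddCommGroup X] [NormedSpace 𝕜 X] [NormedAddCommGroup Y] [NormedSpace 𝕜 Y]
    {J : Submodule 𝕜 X} (P : X →L[𝕜] Y) (h : J ≤ P.ker) : ‖J.liftQL P h‖ ≤ ‖P‖ := by
  refine ContinuousLinearMap.opNorm_le_bound _ (norm_nonneg P) fun q => ?_
  let P' := (P : X →+ Y).mkNormedAddGroupHom ‖P‖ P.le_opNorm
  exact (QuotientAddGroup.norm_lift_apply_le (S := J.toAddSubgroup) P' (fun x hx => h hx) q).trans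
    (mul_le_mul_of_nonneg_right (AddMonoidHom.mkNormedAddGroupHom_norm_le _ (norm_nonneg P) _)
      (norm_nonneg q))

namespace HasCQLP

variable {X : Type*} [NormedAddCommGroup X] [NormedSpace ℝ X] {J : Submodule ℝ X}

theorem of_rightInverse (σ : X ⧸ J →L[ℝ] X) (hσ : ‖σ‖ ≤ 1)
    (hmk : ∀ q, Submodule.Quotient.mk (σ q) = q) : HasCQLP X J := by
  intro Z _ _ _ T hT
  refine ⟨σ.comp T, hT.clm_comp σ, fun z => hmk (T z), le_antisymm ?_ ?_⟩
  · calc ‖σ.comp T‖ ≤ ‖σ‖ * ‖T‖ := σ.opNorm_comp_le T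
      _ ≤ ‖T‖ := mul_le_of_le_one_left (norm_nonneg T) hσ
  · refine T.opNorm_le_bound (norm_nonneg _) fun z => ?_
    calc ‖T z‖ = ‖(Submodule.Quotient.mk (σ (T z)) : X ⧸ J)‖ := by rw [hmk]
      _ ≤ ‖σ (T z)‖ := Submodule.Quotient.norm_mk_le J _
      _ ≤ ‖σ.comp T‖ * ‖z‖ := (σ.comp T).le_opNorm z

theorem of_projection (P : X →L[ℝ] X) (hP : ‖P‖ ≤ 1) (hker : J ≤ P.ker)
    (hsub : ∀ f, P f - f ∈ J) : HasCQLP X J :=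
  of_rightInverse (J.liftQL P hker) ((Submodule.norm_liftQL_le P hker).trans hP) <| by
    rintro ⟨f⟩
    exact (Submodule.Quotient.eq J).2 (hsub f)

end HasCQLP

theorem abs_tsum_mul_div_tsum_sub_le {ι : Type*} {w b : ι → ℝ} {c ε : ℝ} (hw : ∀ i, 0 ≤ w i)
    (hsum : Summable w) (hpos : 0 < ∑' i, w i) (hb : ∀ i, w i ≠ 0 → |b i - c| ≤ ε) :
    |(∑' i, w i * b i) / ∑' i, w i - c| ≤ ε := by
  have hterm : ∀ i, ‖w i * (b i - c)‖ ≤ ε * w i := fun i => by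
    rcases eq_or_ne (w i) 0 with h | h
    · simp [h]
    · rw [Real.norm_eq_abs, abs_mul, abs_of_nonneg (hw i), mul_comm]
      exact mul_le_mul_of_nonneg_right (hb i h) (hw i)
  have hdev : Summable fun i => w i * (b i - c) := (hsum.mul_left ε).of_norm_bounded hterm
  have hdiff : ∑' i, w i * b i - c * ∑' i, w i = ∑' i, w i * (b i - c) := by
    have hwb : Summable fun i => w i * b i := by
      simpa [mul_sub] using hdev.add (hsum.mul_right c)
    rw [← tsum_mul_left, ← hwb.tsum_sub (hsum.mul_left c)]
    congr 1 with i; ring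
  rw [div_sub' hpos.ne', abs_div, abs_of_pos hpos, div_le_iff₀ hpos, mul_comm _ c, hdiff,
    ← Real.norm_eq_abs, ← tsum_mul_left]
  exact tsum_of_norm_bounded ((hsum.mul_left ε).hasSum) hterm

section DugundjiExtension

open Metric

variable {Ω : Type*} [MetricSpace Ω] {E : Set Ω}

/-- The cutoff at `1` makes the weights summable uniformly in `x`, whether or not `Ω` is bounded. -/
noncomputable def dugundjiWeight (a : ℕ → E) (n : ℕ) (x : Ω) : ℝ :=
  (1 / 2) ^ n * min (max (2 * infDist x E - dist x (a n)) 0) 1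

theorem dugundjiWeight_nonneg (a : ℕ → E) (n : ℕ) (x : Ω) : 0 ≤ dugundjiWeight a n x :=
  mul_nonneg (by positivity) (le_min (le_max_right _ _) zero_le_one)

theorem dugundjiWeight_le (a : ℕ → E) (n : ℕ) (x : Ω) : dugundjiWeight a n x ≤ (1 / 2) ^ n :=
  mul_le_of_le_one_right (by positivity) (min_le_right _ _)

theorem continuous_dugundjiWeight (a : ℕ → E) (n : ℕ) : Continuous (dugundjiWeight a n) :=
  continuous_const.mul <| ((continuous_const.mul (continuous_infDist_pt E)).sub
    (continuous_id.dist continuous_const)).max continuous_const |>.min continuous_const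

theorem dist_lt_of_dugundjiWeight_ne_zero {a : ℕ → E} {n : ℕ} {x : Ω}
    (h : dugundjiWeight a n x ≠ 0) : dist x (a n) < 2 * infDist x E := by
  by_contra! hle
  exact h (by simp [dugundjiWeight, max_eq_right (sub_nonpos.2 hle)])

theorem summable_dugundjiWeight (a : ℕ → E) (x : Ω) : Summable fun n => dugundjiWeight a n x :=
  summable_geometric_two.of_nonneg_of_le (dugundjiWeight_nonneg a · x) (dugundjiWeight_le a · x)

theorem norm_dugundjiWeight_mul_le (a : ℕ → E) {b : ℕ → ℝ} {B : ℝ} (hb : ∀ n, ‖b n‖ ≤ B)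
    (n : ℕ) (x : Ω) : ‖dugundjiWeight a n x * b n‖ ≤ (1 / 2) ^ n * B := by
  rw [norm_mul, Real.norm_of_nonneg (dugundjiWeight_nonneg a n x)]
  exact mul_le_mul (dugundjiWeight_le a n x) (hb n) (norm_nonneg _) (by positivity)

theorem summable_dugundjiWeight_mul (a : ℕ → E) {b : ℕ → ℝ} {B : ℝ} (hb : ∀ n, ‖b n‖ ≤ B)
    (x : Ω) : Summable fun n => dugundjiWeight a n x * b n :=
  (summable_geometric_two.mul_right B).of_norm_bounded (norm_dugundjiWeight_mul_le a hb · x)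

theorem continuous_tsum_dugundjiWeight_mul (a : ℕ → E) {b : ℕ → ℝ} {B : ℝ}
    (hb : ∀ n, ‖b n‖ ≤ B) : Continuous fun x => ∑' n, dugundjiWeight a n x * b n :=
  continuous_tsum (fun n => (continuous_dugundjiWeight a n).mul continuous_const)
    (summable_geometric_two.mul_right B) (norm_dugundjiWeight_mul_le a hb)

theorem continuous_tsum_dugundjiWeight (a : ℕ → E) :
    Continuous fun x => ∑' n, dugundjiWeight a n x :=
  continuous_tsum (continuous_dugundjiWeight a) summable_geometric_two fun n x => by
    rw [Real.norm_of_nonneg (dugundjiWeight_nonneg a n x)]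
    exact dugundjiWeight_le a n x

theorem tsum_dugundjiWeight_pos (hE : IsClosed E) {a : ℕ → E} (ha : DenseRange a) {x : Ω}
    (hx : x ∉ E) : 0 < ∑' n, dugundjiWeight a n x := by
  have hne : E.Nonempty := ⟨a 0, (a 0).2⟩
  have hd : 0 < infDist x E := (hE.notMem_iff_infDist_pos hne).1 hx
  obtain ⟨e, he, hxe⟩ := (infDist_lt_iff hne).1 (by linarith : infDist x E < 3 / 2 * infDist x E)
  obtain ⟨n, hn⟩ := denseRange_iff.1 ha ⟨e, he⟩ (infDist x E / 2) (by linarith)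
  have hxa : dist x (a n) < 2 * infDist x E := by
    have : dist e (a n) < infDist x E / 2 := by simpa [Subtype.dist_eq] using hn
    linarith [dist_triangle x e (a n)]
  refine (summable_dugundjiWeight a x).tsum_pos (dugundjiWeight_nonneg a · x) n ?_
  exact mul_pos (by positivity) (lt_min (lt_max_of_lt_left (by linarith)) one_pos)

open scoped Classical in
noncomputable def dugundjiExtension (a : ℕ → E) (g : E → ℝ) (x : Ω) : ℝ :=
  if hx : x ∈ E then g ⟨x, hx⟩
  else (∑' n, dugundjiWeight a n x * g (a n)) / ∑' n, dugundjiWeight a n x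

theorem dugundjiExtension_of_mem (a : ℕ → E) (g : E → ℝ) {x : Ω} (hx : x ∈ E) :
    dugundjiExtension a g x = g ⟨x, hx⟩ :=
  dif_pos hx

theorem dugundjiExtension_of_notMem (a : ℕ → E) (g : E → ℝ) {x : Ω} (hx : x ∉ E) :
    dugundjiExtension a g x =
      (∑' n, dugundjiWeight a n x * g (a n)) / ∑' n, dugundjiWeight a n x :=
  dif_neg hx

theorem abs_dugundjiExtension_sub_le_of_notMem (hE : IsClosed E) {a : ℕ → E} (ha : DenseRange a)
    (g : E → ℝ) {x : Ω} (hx : x ∉ E) {c ε : ℝ}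
    (hg : ∀ n, dist x (a n) < 2 * infDist x E → |g (a n) - c| ≤ ε) :
    |dugundjiExtension a g x - c| ≤ ε := by
  rw [dugundjiExtension_of_notMem a g hx]
  exact abs_tsum_mul_div_tsum_sub_le (dugundjiWeight_nonneg a · x) (summable_dugundjiWeight a x)
    (tsum_dugundjiWeight_pos hE ha hx) fun n hn => hg n (dist_lt_of_dugundjiWeight_ne_zero hn)

theorem abs_dugundjiExtension_le (hE : IsClosed E) {a : ℕ → E} (ha : DenseRange a)
    {g : E → ℝ} {B : ℝ} (hB : ∀ y, ‖g y‖ ≤ B) (x : Ω) : |dugundjiExtension a g x| ≤ B := by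
  by_cases hx : x ∈ E
  · exact (dugundjiExtension_of_mem a g hx).symm ▸ hB _
  · simpa using abs_dugundjiExtension_sub_le_of_notMem hE ha g hx (c := 0) fun n _ => by
      simpa using hB (a n)

theorem abs_dugundjiExtension_sub_le (hE : IsClosed E) {a : ℕ → E} (ha : DenseRange a)
    (g : E → ℝ) {x₀ : Ω} (hx₀ : x₀ ∈ E) (x : Ω) {ε : ℝ}
    (hg : ∀ y : E, dist (y : Ω) x₀ ≤ 3 * dist x x₀ → |g y - g ⟨x₀, hx₀⟩| ≤ ε) :
    |dugundjiExtension a g x - g ⟨x₀, hx₀⟩| ≤ ε := by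
  by_cases hx : x ∈ E
  · rw [dugundjiExtension_of_mem a g hx]
    exact hg ⟨x, hx⟩ (by linarith [dist_nonneg (x := x) (y := x₀)])
  · refine abs_dugundjiExtension_sub_le_of_notMem hE ha g hx fun n hn => hg (a n) ?_
    have : infDist x E ≤ dist x x₀ := infDist_le_dist_of_mem hx₀
    linarith [dist_triangle_left (a n : Ω) x₀ x]

theorem continuous_dugundjiExtension (hE : IsClosed E) {a : ℕ → E} (ha : DenseRange a)
    {g : E → ℝ} (hg : Continuous g) {B : ℝ} (hB : ∀ y, ‖g y‖ ≤ B) :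
    Continuous (dugundjiExtension a g) := by
  refine continuous_iff_continuousAt.2 fun x₀ => ?_
  by_cases hx₀ : x₀ ∈ E
  · refine continuousAt_iff.2 fun ε hε => ?_
    obtain ⟨δ, hδ, hgδ⟩ := continuousAt_iff.1 hg.continuousAt (ε / 2) (half_pos hε)
    refine ⟨δ / 3, by positivity, fun {x} hx => ?_⟩
    rw [Real.dist_eq, dugundjiExtension_of_mem a g hx₀]
    refine (abs_dugundjiExtension_sub_le hE ha g hx₀ x fun y hy => ?_).trans_lt (half_lt_self hε)
    exact (hgδ (x := y) (by rw [Subtype.dist_eq]; linarith)).le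
  · have hW := (tsum_dugundjiWeight_pos hE ha hx₀).ne'
    refine ((continuous_tsum_dugundjiWeight_mul a (hB <| a ·)).continuousAt.div
      (continuous_tsum_dugundjiWeight a).continuousAt hW).congr ?_
    filter_upwards [hE.isOpen_compl.mem_nhds hx₀] with x hx
    exact (dugundjiExtension_of_notMem a g hx).symm

variable [CompactSpace E]

noncomputable def dugundjiExtensionₗ (hE : IsClosed E) {a : ℕ → E} (ha : DenseRange a) :
    C(E, ℝ) →ₗ[ℝ] C(Ω, ℝ) where
  toFun g :=
    ⟨dugundjiExtension a g, continuous_dugundjiExtension hE ha g.continuous g.norm_coe_le_norm⟩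
  map_add' g h := by
    ext x
    by_cases hx : x ∈ E
    · simp [dugundjiExtension_of_mem _ _ hx]
    · simp only [ContinuousMap.coe_mk, ContinuousMap.add_apply, dugundjiExtension_of_notMem _ _ hx,
        mul_add, ← add_div]
      rw [(summable_dugundjiWeight_mul a (g.norm_coe_le_norm <| a ·) x).tsum_add
        (summable_dugundjiWeight_mul a (h.norm_coe_le_norm <| a ·) x)]
  map_smul' c g := by
    ext x
    by_cases hx : x ∈ E
    · simp [dugundjiExtension_of_mem _ _ hx]
    · simp only [ContinuousMap.coe_mk, ContinuousMap.smul_apply, dugundjiExtension_of_notMem _ _ hx,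
        smul_eq_mul, RingHom.id_apply, mul_left_comm _ c, tsum_mul_left, mul_div_assoc]

end DugundjiExtension

theorem exists_extensionCLM_norm_le_one {Ω : Type*} [MetricSpace Ω] [CompactSpace Ω] (E : Set Ω)
    [CompactSpace E] : ∃ L : C(E, ℝ) →L[ℝ] C(Ω, ℝ), ‖L‖ ≤ 1 ∧ ∀ g (y : E), L g y = g y := by
  rcases isEmpty_or_nonempty E with hE | hE
  · exact ⟨0, by simp, fun g y => isEmptyElim y⟩
  have hcl : IsClosed E := (isCompact_iff_compactSpace.2 ‹_›).isClosed
  have hdense := TopologicalSpace.denseRange_denseSeq E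
  refine ⟨(dugundjiExtensionₗ hcl hdense).mkContinuous 1 fun g => ?_,
    LinearMap.mkContinuous_norm_le _ zero_le_one _,
    fun g y => dugundjiExtension_of_mem _ g y.2⟩
  rw [one_mul, ContinuousMap.norm_le _ (norm_nonneg g)]
  exact abs_dugundjiExtension_le hcl hdense g.norm_coe_le_norm

section Restriction

variable {Ω : Type*} [TopologicalSpace Ω] [CompactSpace Ω] (E : Set Ω) [CompactSpace E]

noncomputable def ContinuousMap.restrictL : C(Ω, ℝ) →L[ℝ] C(E, ℝ) :=
  LinearMap.mkContinuous
    { toFun := fun f => f.restrict E, map_add' := fun _ _ => rfl, map_smul' := fun _ _ => rfl } 1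
    fun f => by
      rw [one_mul, ContinuousMap.norm_le _ (norm_nonneg f)]
      exact fun y => f.norm_coe_le_norm y

@[simp]
theorem ContinuousMap.restrictL_apply (f : C(Ω, ℝ)) : restrictL E f = f.restrict E :=
  rfl

theorem ContinuousMap.norm_restrictL_le : ‖restrictL (Ω := Ω) E‖ ≤ 1 :=
  LinearMap.mkContinuous_norm_le _ zero_le_one _

end Restriction

/-- Let Ω be a compact metric space, E ⊆ Ω a closed set, and
J = {f ∈ C(Ω) : f|E = 0}.  Then (C(Ω), J) has the CQLP. -/
theorem stmt_4 (Ω : Type*) [MetricSpace Ω] [CompactSpace Ω] (E : Set Ω) (hE : IsClosed E) :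
    HasCQLP C(Ω, ℝ) (vanishingIdeal Ω E) := by
  have : CompactSpace E := isCompact_iff_compactSpace.1 hE.isCompact
  obtain ⟨L, hL, hLE⟩ := exists_extensionCLM_norm_le_one (Ω := Ω) E
  set R := ContinuousMap.restrictL (Ω := Ω) E
  refine HasCQLP.of_projection (L.comp R) ?_ (fun f hf => ?_) (fun f x hx => ?_)
  · calc ‖L.comp R‖ ≤ ‖L‖ * ‖R‖ := L.opNorm_comp_le R
      _ ≤ 1 := mul_le_one₀ hL R.opNorm_nonneg (ContinuousMap.norm_restrictL_le E)
  · have hRf : R f = 0 := by ext y; exact hf y y.2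
    simp [hRf]
  · simpa [R, sub_eq_zero] using hLE (R f) ⟨x, hx⟩
end

section
/- Suppose (X,J) has the CQLP and {π(xₙ)} is a relatively compact sequence in X/J. Then there exists a relatively compact sequence {zₙ} ⊂ X with π(zₙ) = π(xₙ) for all n and sup‖zₙ‖ (indeed the norm of the associated operator) equal to that of {π(xₙ)}. -/
open Set
open scoped lp Pointwise

section AbsConvex

variable {ι E : Type*} [AddCommGroup E] [Module ℝ E] {s : Set E}

theorem AbsConvex.sum_smul_mem_smul (hs : AbsConvex ℝ s) (hne : s.Nonempty) {t : Finset ι}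
    {v : ι → E} (hv : ∀ i ∈ t, v i ∈ s) (a : ι → ℝ) :
    ∑ i ∈ t, a i • v i ∈ (∑ i ∈ t, |a i|) • s := by
  classical
  induction t using Finset.induction_on with
  | empty => simp [zero_smul_set hne]
  | insert j t hj ih =>
    rw [Finset.sum_insert hj, Finset.sum_insert hj,
      hs.2.add_smul (abs_nonneg _) (Finset.sum_nonneg fun i _ => abs_nonneg (a i))]
    refine add_mem_add ?_ (ih fun i hi => hv i (Finset.mem_insert_of_mem hi))
    rw [← hs.1.smul_congr (by simp : ‖a j‖ = ‖|a j|‖)]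
    exact smul_mem_smul_set (hv j (Finset.mem_insert_self j t))

theorem AbsConvex.sum_smul_mem (hs : AbsConvex ℝ s) (hne : s.Nonempty) {t : Finset ι}
    {v : ι → E} (hv : ∀ i ∈ t, v i ∈ s) {a : ι → ℝ} (ha : ∑ i ∈ t, |a i| ≤ 1) :
    ∑ i ∈ t, a i • v i ∈ s := by
  have hsum : ‖∑ i ∈ t, |a i|‖ ≤ ‖(1 : ℝ)‖ := by
    rwa [norm_one, Real.norm_of_nonneg (Finset.sum_nonneg fun i _ => abs_nonneg (a i))]
  simpa using hs.1.smul_mono hsum (AbsConvex.sum_smul_mem_smul hs hne hv a)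

end AbsConvex

namespace lp

variable {ι : Type*}

theorem norm_single_one [DecidableEq ι] (i : ι) : ‖(lp.single 1 i 1 : ℓ¹(ι, ℝ))‖ = 1 := by
  simp [lp.norm_single]

theorem summable_norm_of_one (a : ℓ¹(ι, ℝ)) : Summable fun i => ‖a i‖ := by
  simpa using (lp.memℓp a).summable (by norm_num)

theorem norm_eq_tsum_norm_of_one (a : ℓ¹(ι, ℝ)) : ‖a‖ = ∑' i, ‖a i‖ := by
  simpa using lp.norm_eq_tsum_rpow (by norm_num) a

theorem sum_abs_le_norm_of_one (a : ℓ¹(ι, ℝ)) (t : Finset ι) : ∑ i ∈ t, |a i| ≤ ‖a‖ := by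
  simpa using lp.sum_rpow_le_norm_rpow (by norm_num) a t

variable {Y : Type*} [NormedAddCommGroup Y] [NormedSpace ℝ Y] {y : ι → Y} {C : ℝ}

theorem norm_apply_smul_le (hC : ∀ i, ‖y i‖ ≤ C) (a : ℓ¹(ι, ℝ)) (i : ι) :
    ‖a i • y i‖ ≤ ‖a i‖ * C := by
  rw [norm_smul]
  gcongr
  exact hC i

theorem summable_norm_smul_of_one (hC : ∀ i, ‖y i‖ ≤ C) (a : ℓ¹(ι, ℝ)) :
    Summable fun i => ‖a i • y i‖ :=
  .of_nonneg_of_le (fun _ => norm_nonneg _) (norm_apply_smul_le hC a)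
    ((summable_norm_of_one a).mul_right C)

variable [CompleteSpace Y]

theorem summable_smul_of_one (hC : ∀ i, ‖y i‖ ≤ C) (a : ℓ¹(ι, ℝ)) :
    Summable fun i => a i • y i :=
  .of_norm (summable_norm_smul_of_one hC a)

noncomputable def tsumSMulCLM (y : ι → Y) (hC : ∀ i, ‖y i‖ ≤ C) : ℓ¹(ι, ℝ) →L[ℝ] Y :=
  LinearMap.mkContinuous
    { toFun a := ∑' i, a i • y i
      map_add' a b := by
        simp only [coeFn_add, Pi.add_apply, add_smul]
        exact (summable_smul_of_one hC a).tsum_add (summable_smul_of_one hC b)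
      map_smul' c a := by
        simp only [coeFn_smul, Pi.smul_apply, smul_eq_mul, mul_smul, RingHom.id_apply]
        exact (summable_smul_of_one hC a).tsum_const_smul c }
    C fun a => calc
      ‖∑' i, a i • y i‖ ≤ ∑' i, ‖a i • y i‖ :=
          norm_tsum_le_tsum_norm (summable_norm_smul_of_one hC a)
      _ ≤ ∑' i, ‖a i‖ * C := (summable_norm_smul_of_one hC a).tsum_le_tsum
          (norm_apply_smul_le hC a) ((summable_norm_of_one a).mul_right C)
      _ = C * ‖a‖ := by rw [tsum_mul_right, norm_eq_tsum_norm_of_one, mul_comm]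

theorem hasSum_tsumSMulCLM (hC : ∀ i, ‖y i‖ ≤ C) (a : ℓ¹(ι, ℝ)) :
    HasSum (fun i => a i • y i) (tsumSMulCLM y hC a) :=
  (summable_smul_of_one hC a).hasSum

theorem norm_tsumSMulCLM_le (hC : ∀ i, ‖y i‖ ≤ C) (hC₀ : 0 ≤ C) : ‖tsumSMulCLM y hC‖ ≤ C :=
  LinearMap.mkContinuous_norm_le _ hC₀ _

theorem tsumSMulCLM_single [DecidableEq ι] (hC : ∀ i, ‖y i‖ ≤ C) (i : ι) :
    tsumSMulCLM y hC (lp.single 1 i 1) = y i := by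
  refine (hasSum_tsumSMulCLM hC _).unique ?_
  convert hasSum_single (f := fun j => (lp.single 1 i 1 : ℓ¹(ι, ℝ)) j • y j) i
    fun j hj => by rw [lp.single_apply_ne 1 i _ hj, zero_smul]
  rw [lp.single_apply_self, one_smul]

/-- For `‖a‖ ≤ 1` the partial sums of `∑ aᵢ • yᵢ` lie in the totally bounded absolutely convex
hull of `range y ∪ {0}` (with `0` added so that the hull is nonempty even for empty `ι`). -/
theorem isCompactOperator_tsumSMulCLM (hC : ∀ i, ‖y i‖ ≤ C) (hy : TotallyBounded (range y)) :
    IsCompactOperator (tsumSMulCLM y hC) := by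
  rw [isCompactOperator_iff_exists_mem_nhds_image_subset_compact]
  refine ⟨Metric.closedBall 0 1, Metric.closedBall_mem_nhds 0 one_pos,
    closure (absConvexHull ℝ (insert 0 (range y))),
    (totallyBounded_absConvexHull.mpr (hy.insert 0)).closure.isCompact_of_isClosed
      isClosed_closure, ?_⟩
  rintro _ ⟨a, ha, rfl⟩
  refine mem_closure_of_tendsto (hasSum_tsumSMulCLM hC a) (Filter.Eventually.of_forall fun t => ?_)
  have hnorm : ‖a‖ ≤ 1 := by simpa using ha
  exact AbsConvex.sum_smul_mem absConvex_absConvexHull ⟨0, subset_absConvexHull (mem_insert 0 _)⟩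
    (fun i _ => subset_absConvexHull (mem_insert_of_mem 0 (mem_range_self i)))
    ((sum_abs_le_norm_of_one a t).trans hnorm)

end lp

theorem IsCompactOperator.isCompact_closure_range_comp {ι E F : Type*} [SeminormedAddCommGroup E]
    [NormedSpace ℝ E] [NormedAddCommGroup F] [NormedSpace ℝ F] {f : E →L[ℝ] F}
    (hf : IsCompactOperator f) {v : ι → E} (hv : Bornology.IsBounded (range v)) :
    IsCompact (closure (range (f ∘ v))) := by
  rw [range_comp]
  exact hf.isCompact_closure_image_of_bounded hv

/-- If (X,J) has the CQLP and {π(xₙ)} is a relatively compact sequence in X/J,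
then there is a relatively compact sequence {zₙ} ⊆ X with π(zₙ) = π(xₙ) for all n and with
the same bound: sup ‖zₙ‖ = sup ‖π(xₙ)‖. -/
theorem stmt_6 (X : Type*) [NormedAddCommGroup X] [NormedSpace ℝ X] [CompleteSpace X]
    (J : Submodule ℝ X) (hJ : IsClosed (J : Set X)) (h : HasCQLP X J)
    (x : ℕ → X)
    (hx : IsCompact (closure (Set.range (fun n => (Submodule.Quotient.mk (x n) : X ⧸ J))))) :
    ∃ z : ℕ → X, IsCompact (closure (Set.range z)) ∧
      (∀ n, (Submodule.Quotient.mk (z n) : X ⧸ J) = Submodule.Quotient.mk (x n)) ∧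
      (⨆ n, ‖z n‖) = ⨆ n, ‖(Submodule.Quotient.mk (x n) : X ⧸ J)‖ := by
  set y : ℕ → X ⧸ J := fun n => Submodule.Quotient.mk (x n)
  have hy_bdd : BddAbove (range fun n => ‖y n‖) :=
    (hx.bddAbove_image continuous_norm.continuousOn).mono <| range_subset_iff.2 fun n =>
      mem_image_of_mem _ (subset_closure (mem_range_self n))
  have hC : ∀ n, ‖y n‖ ≤ ⨆ n, ‖y n‖ := le_ciSup hy_bdd
  obtain ⟨S, hS, hST, hS_norm⟩ := h _ (lp.tsumSMulCLM y hC)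
    (lp.isCompactOperator_tsumSMulCLM hC (hx.totallyBounded.subset subset_closure))
  set e : ℕ → ℓ¹(ℕ, ℝ) := fun n => lp.single 1 n 1
  have hz : ∀ n, Submodule.Quotient.mk (S (e n)) = y n := fun n =>
    (hST _).trans (lp.tsumSMulCLM_single hC n)
  have hz_le : ∀ n, ‖S (e n)‖ ≤ ‖S‖ := fun n => S.unit_le_opNorm _ (lp.norm_single_one n).le
  refine ⟨S ∘ e, hS.isCompact_closure_range_comp ?_, hz, le_antisymm ?_ ?_⟩
  · exact isBounded_iff_forall_norm_le.2 ⟨1, forall_mem_range.2 fun n => (lp.norm_single_one n).le⟩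
  · refine ciSup_le fun n => (hz_le n).trans ?_
    rw [hS_norm]
    exact lp.norm_tsumSMulCLM_le hC (Real.iSup_nonneg fun _ => norm_nonneg _)
  · refine ciSup_mono ⟨‖S‖, forall_mem_range.2 hz_le⟩ fun n => ?_
    exact (hz n ▸ Submodule.Quotient.norm_mk_le J (S (e n)) : ‖y n‖ ≤ _)
end

section
/- Let J ⊂ Y ⊂ X be closed subspaces of a Banach space X. If (X,J) has the CQLP, then (Y,J) has the CQLP. -/
section aux

variable {X : Type*} [NormedAddCommGroup X] [NormedSpace ℝ X]
  (J Y : Submodule ℝ X) (hJY : J ≤ Y)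

/-- Canonical map `Y ⧸ (J ∩ Y) → X ⧸ J`. -/
noncomputable def auxIota : (Y ⧸ J.comap Y.subtype) →ₗ[ℝ] X ⧸ J :=
  Submodule.mapQ (J.comap Y.subtype) J Y.subtype le_rfl

lemma auxIota_mk (y : Y) :
    auxIota J Y (Submodule.Quotient.mk y) = Submodule.Quotient.mk (y : X) := rfl

lemma auxIota_isometric (hJY : J ≤ Y) (v : Y ⧸ J.comap Y.subtype) :
    ‖auxIota J Y v‖ = ‖v‖ := by
  obtain ⟨y, rfl⟩ := Submodule.Quotient.mk_surjective _ v
  rw [auxIota_mk]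
  apply le_antisymm
  · refine le_of_forall_pos_le_add fun ε hε => ?_
    obtain ⟨m, hm, hm'⟩ := Submodule.Quotient.norm_mk_lt
      (Submodule.Quotient.mk y : Y ⧸ J.comap Y.subtype) hε
    have hmk : (Submodule.Quotient.mk (m : X) : X ⧸ J) = Submodule.Quotient.mk (y : X) := by
      rw [Submodule.Quotient.eq]
      have : m - y ∈ J.comap Y.subtype := (Submodule.Quotient.eq _).mp hm
      simpa using this
    calc ‖(Submodule.Quotient.mk (y : X) : X ⧸ J)‖
        = ‖(Submodule.Quotient.mk (m : X) : X ⧸ J)‖ := by rw [hmk]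
      _ ≤ ‖(m : X)‖ := Submodule.Quotient.norm_mk_le _ _
      _ = ‖m‖ := rfl
      _ ≤ ‖(Submodule.Quotient.mk y : Y ⧸ J.comap Y.subtype)‖ + ε := le_of_lt hm'
  · refine le_of_forall_pos_le_add fun ε hε => ?_
    obtain ⟨m, hm, hm'⟩ := Submodule.Quotient.norm_mk_lt
      (Submodule.Quotient.mk (y : X) : X ⧸ J) hε
    have hmJ : m - (y : X) ∈ J := (Submodule.Quotient.eq _).mp hm
    have hmY : m ∈ Y := by
      have : m - (y : X) + (y : X) ∈ Y := Y.add_mem (hJY hmJ) y.2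
      simpa using this
    have hmk : (Submodule.Quotient.mk (⟨m, hmY⟩ : Y) : Y ⧸ J.comap Y.subtype)
        = Submodule.Quotient.mk y := by
      rw [Submodule.Quotient.eq]
      simpa using hmJ
    calc ‖(Submodule.Quotient.mk y : Y ⧸ J.comap Y.subtype)‖
        = ‖(Submodule.Quotient.mk (⟨m, hmY⟩ : Y) : Y ⧸ J.comap Y.subtype)‖ := by rw [hmk]
      _ ≤ ‖(⟨m, hmY⟩ : Y)‖ := Submodule.Quotient.norm_mk_le _ _
      _ = ‖m‖ := rfl
      _ ≤ ‖(Submodule.Quotient.mk (y : X) : X ⧸ J)‖ + ε := le_of_lt hm'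

/-- `auxIota` as a continuous linear map. -/
noncomputable def auxIotaL (hJY : J ≤ Y) : (Y ⧸ J.comap Y.subtype) →L[ℝ] X ⧸ J where
  toLinearMap := auxIota J Y
  cont := AddMonoidHomClass.continuous_of_bound (auxIota J Y) 1 fun v => by
    rw [auxIota_isometric J Y hJY v, one_mul]

lemma auxIotaL_apply (hJY : J ≤ Y) (v : Y ⧸ J.comap Y.subtype) :
    auxIotaL J Y hJY v = auxIota J Y v := rfl

end aux

/-- If J ⊆ Y ⊆ X are closed subspaces of a Banach space X and (X,J) has the
CQLP, then (Y,J) has the CQLP (J viewed as a subspace of Y). -/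
theorem stmt_8 (X : Type*) [NormedAddCommGroup X] [NormedSpace ℝ X] [CompleteSpace X]
    (J Y : Submodule ℝ X) (hJY : J ≤ Y)
    (hJ : IsClosed (J : Set X)) (hY : IsClosed (Y : Set X))
    (h : HasCQLP X J) : HasCQLP Y (J.comap Y.subtype) := by
  intro Z _ _ _ T hT
  set ι := auxIotaL J Y hJY with hι
  -- the composed operator into X ⧸ J
  have hT' : IsCompactOperator (ι.comp T) := hT.clm_comp ι
  obtain ⟨S, hScomp, hSlift, hSnorm⟩ := h Z (ι.comp T) hT'
  -- S maps into Y
  have hmem : ∀ z : Z, S z ∈ Y := by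
    intro z
    obtain ⟨y, hy⟩ := Submodule.Quotient.mk_surjective _ (T z)
    have : (Submodule.Quotient.mk (S z) : X ⧸ J) = Submodule.Quotient.mk (y : X) := by
      rw [hSlift z, ContinuousLinearMap.comp_apply, ← hy, auxIotaL_apply, auxIota_mk]
    have hd : S z - (y : X) ∈ J := (Submodule.Quotient.eq _).mp this
    have : S z - (y : X) + (y : X) ∈ Y := Y.add_mem (hJY hd) y.2
    simpa using this
  refine ⟨S.codRestrict Y hmem, ?_, ?_, ?_⟩
  · -- compactness
    obtain ⟨K, hK, hKnhds⟩ := hScomp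
    refine ⟨Subtype.val ⁻¹' K, ?_, hKnhds⟩
    rw [Topology.IsEmbedding.subtypeVal.isCompact_iff]
    have : Subtype.val '' (Subtype.val ⁻¹' K : Set Y) = K ∩ Y := by
      ext x; simp [Set.mem_image, and_comm]
    rw [this]
    exact hK.inter_right hY
  · -- lifting property
    intro z
    obtain ⟨y, hy⟩ := Submodule.Quotient.mk_surjective _ (T z)
    have hx : (Submodule.Quotient.mk (S z) : X ⧸ J) = Submodule.Quotient.mk (y : X) := by
      rw [hSlift z, ContinuousLinearMap.comp_apply, ← hy, auxIotaL_apply, auxIota_mk]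
    have hd : S z - (y : X) ∈ J := (Submodule.Quotient.eq _).mp hx
    rw [← hy, Submodule.Quotient.eq]
    simpa using hd
  · -- norms
    have h1 : ‖S.codRestrict Y hmem‖ = ‖S‖ := by
      apply ContinuousLinearMap.opNorm_eq_of_bounds (norm_nonneg _)
      · intro z
        calc ‖S.codRestrict Y hmem z‖ = ‖S z‖ := rfl
          _ ≤ ‖S‖ * ‖z‖ := S.le_opNorm z
      · intro N hN hbound
        exact S.opNorm_le_bound hN fun z => hbound z
    have h2 : ‖ι.comp T‖ = ‖T‖ := by
      apply le_antisymm
      · apply (ι.comp T).opNorm_le_bound (norm_nonneg T)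
        intro z
        calc ‖(ι.comp T) z‖ = ‖T z‖ := auxIota_isometric J Y hJY (T z)
          _ ≤ ‖T‖ * ‖z‖ := T.le_opNorm z
      · apply T.opNorm_le_bound (norm_nonneg (ι.comp T))
        intro z
        calc ‖T z‖ = ‖ι (T z)‖ := (auxIota_isometric J Y hJY (T z)).symm
          _ = ‖(ι.comp T) z‖ := rfl
          _ ≤ ‖ι.comp T‖ * ‖z‖ := (ι.comp T).le_opNorm z
    rw [h1, hSnorm, h2]
end

section
/- Let J be a reflexive closed subspace of a Banach space X. If (X**, J) has the CQLP (where J = J^⊥⊥ via reflexivity), then (X,J) has the CQLP. -/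
/-!
The canonical embedding `X → X**` is a linear isometry, and it induces a linear isometry
`X ⧸ J → X** ⧸ J`. Compose a compact `T : Z → X ⧸ J` with it and lift the result to a compact
`S' : Z → X**` of the same norm. Each `S' z` differs from an element of `X` by an element of `J`,
so `S'` takes values in `X`; as `X` is complete it is closed in `X**`, hence `S'` is still
compact as an operator into `X`, and it lifts `T`.
-/

open NormedSpace

theorem Submodule.Quotient.norm_mk_eq_infDist {R M : Type*} [Ring R] [SeminormedAddCommGroup M]
    [Module R M] (p : Submodule R M) (x : M) :
    ‖(Submodule.Quotient.mk x : M ⧸ p)‖ = Metric.infDist x p :=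
  QuotientAddGroup.norm_mk (S := p.toAddSubgroup) x

theorem IsCompactOperator.of_comp_isometry {M E F : Type*} [Zero M] [TopologicalSpace M]
    [MetricSpace E] [CompleteSpace E] [EMetricSpace F] {f : E → F} {g : M → E}
    (hf : Isometry f) (h : IsCompactOperator (f ∘ g)) : IsCompactOperator g := by
  obtain ⟨K, hK, hgK⟩ := h
  exact ⟨f ⁻¹' K, hf.isClosedEmbedding.isCompact_preimage hK, hgK⟩

namespace LinearIsometry

variable {R E F : Type*} [Ring R] [SeminormedAddCommGroup F] [Module R F]

section Seminormed

variable [SeminormedAddCommGroup E] [Module R E]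

def quotientMap (f : E →ₗᵢ[R] F) (p : Submodule R E) :
    (E ⧸ p) →ₗᵢ[R] F ⧸ p.map f.toLinearMap where
  toLinearMap := p.mapQ _ f.toLinearMap (Submodule.le_comap_map _ _)
  norm_map' := by
    rintro ⟨x⟩
    change ‖(Submodule.Quotient.mk (f x) : F ⧸ p.map f.toLinearMap)‖ =
      ‖(Submodule.Quotient.mk x : E ⧸ p)‖
    rw [Submodule.Quotient.norm_mk_eq_infDist, Submodule.Quotient.norm_mk_eq_infDist,
      Submodule.map_coe]
    exact Metric.infDist_image f.isometry

@[simp]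
theorem quotientMap_mk (f : E →ₗᵢ[R] F) (p : Submodule R E) (x : E) :
    f.quotientMap p (Submodule.Quotient.mk x) = Submodule.Quotient.mk (f x) :=
  rfl

end Seminormed

variable [NormedAddCommGroup E] [Module R E]

theorem quotientMap_injective (f : E →ₗᵢ[R] F) (p : Submodule R E) :
    Function.Injective (f.quotientMap p) := by
  have hker : LinearMap.ker (f.quotientMap p).toLinearMap = ⊥ := by
    rw [quotientMap, Submodule.ker_mapQ, Submodule.comap_map_eq_of_injective f.injective,
      Submodule.mkQ_map_self]
  exact LinearMap.ker_eq_bot.mp hker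

theorem mem_range_of_mk_eq_quotientMap (f : E →ₗᵢ[R] F) {p : Submodule R E} {y : F}
    {q : E ⧸ p} (h : Submodule.Quotient.mk y = f.quotientMap p q) :
    y ∈ LinearMap.range f.toLinearMap := by
  obtain ⟨x, rfl⟩ := Submodule.Quotient.mk_surjective p q
  rw [quotientMap_mk, Submodule.Quotient.eq] at h
  simpa using add_mem (LinearMap.map_le_range h) (LinearMap.mem_range_self f.toLinearMap x)

theorem exists_comp_eq_of_forall_mem_range {Z : Type*} [TopologicalSpace Z] [AddCommGroup Z]
    [Module R Z] (f : E →ₗᵢ[R] F) (T : Z →L[R] F)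
    (hT : ∀ z, T z ∈ LinearMap.range f.toLinearMap) :
    ∃ S : Z →L[R] E, f.toContinuousLinearMap ∘L S = T :=
  ⟨f.equivRange.symm.toContinuousLinearEquiv.toContinuousLinearMap ∘L T.codRestrict _ hT, by
    ext z
    exact congrArg Subtype.val (f.equivRange.apply_symm_apply (T.codRestrict _ hT z))⟩

end LinearIsometry

theorem HasCQLP.of_linearIsometry {E F : Type*} [NormedAddCommGroup E] [NormedSpace ℝ E]
    [CompleteSpace E] [NormedAddCommGroup F] [NormedSpace ℝ F] (f : E →ₗᵢ[ℝ] F)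
    {p : Submodule ℝ E} (h : HasCQLP F (p.map f.toLinearMap)) : HasCQLP E p := by
  intro Z _ _ _ T hT
  set g := (f.quotientMap p).toContinuousLinearMap
  obtain ⟨S', hS'_compact, hS'_lift, hS'_norm⟩ := h Z (g ∘L T) (hT.continuous_comp g.continuous)
  obtain ⟨S, rfl⟩ := f.exists_comp_eq_of_forall_mem_range S' fun z ↦
    f.mem_range_of_mk_eq_quotientMap (hS'_lift z)
  refine ⟨S, .of_comp_isometry f.isometry hS'_compact, fun z ↦ ?_, ?_⟩
  · exact f.quotientMap_injective p (hS'_lift z)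
  · rwa [f.norm_toContinuousLinearMap_comp, (f.quotientMap p).norm_toContinuousLinearMap_comp]
      at hS'_norm

theorem stmt_10_general (X : Type*) [NormedAddCommGroup X] [NormedSpace ℝ X] [CompleteSpace X]
    (J : Submodule ℝ X)
    (h : HasCQLP (StrongDual ℝ (StrongDual ℝ X)) ((Submodule.map (inclusionInDoubleDual ℝ X).toLinearMap J : Submodule ℝ (StrongDual ℝ (StrongDual ℝ X))))) :
    HasCQLP X J := by
  have hmap : (inclusionInDoubleDual ℝ X).toLinearMap =
      (inclusionInDoubleDualLi ℝ (E := X)).toLinearMap := rfl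
  rw [hmap] at h
  exact h.of_linearIsometry _

/-- Let J be a reflexive closed subspace of X.  If (X**, J) has the CQLP
(J viewed inside X** via the canonical embedding, J = J^⊥⊥ by reflexivity), then (X,J)
has the CQLP. -/
theorem stmt_10 (X : Type*) [NormedAddCommGroup X] [NormedSpace ℝ X] [CompleteSpace X]
    (J : Submodule ℝ X) (hJ : IsClosed (J : Set X))
    (hrefl : Function.Surjective (inclusionInDoubleDual ℝ J))
    (h : HasCQLP (StrongDual ℝ (StrongDual ℝ X)) ((Submodule.map (inclusionInDoubleDual ℝ X).toLinearMap J : Submodule ℝ (StrongDual ℝ (StrongDual ℝ X))))) :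
    HasCQLP X J :=
  stmt_10_general X J h
end

section
/- Let Z ⊂ Y ⊂ X be closed subspaces with Y of finite codimension in X. If (X,Y) has the CQLP, then (X/Z, Y/Z) has the CQLP. -/
theorem Submodule.norm_mkQL_comp_le {𝕜 E F : Type*} [NontriviallyNormedField 𝕜]
    [SeminormedAddCommGroup E] [SeminormedAddCommGroup F] [NormedSpace 𝕜 E] [NormedSpace 𝕜 F]
    (Z : Submodule 𝕜 F) (S : E →L[𝕜] F) : ‖Z.mkQL ∘L S‖ ≤ ‖S‖ :=
  ContinuousLinearMap.opNorm_le_bound _ (norm_nonneg S) fun x =>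
    (Quotient.norm_mk_le Z (S x)).trans (S.le_opNorm x)

theorem HasCQLP.map_mkQ {X : Type*} [NormedAddCommGroup X] [NormedSpace ℝ X]
    {Y Z : Submodule ℝ X} [IsClosed (Z : Set X)] (hZY : Z ≤ Y) (h : HasCQLP X Y) :
    HasCQLP (X ⧸ Z) (Y.map Z.mkQ) := by
  intro W _ _ _ T hT
  let e := Submodule.quotientQuotientLIEQuotient Z Y hZY
  let eL := e.toLinearIsometry.toContinuousLinearMap
  obtain ⟨S, hS, hST, hnorm⟩ := h W (eL ∘L T) (hT.clm_comp eL)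
  have hlift (w : W) : Submodule.Quotient.mk (Z.mkQL (S w)) = T w :=
    e.injective (hST w)
  have hT_eq : (Y.map Z.mkQ).mkQL ∘L Z.mkQL ∘L S = T := ContinuousLinearMap.ext hlift
  refine ⟨Z.mkQL ∘L S, hS.clm_comp Z.mkQL, hlift, le_antisymm ?_ ?_⟩
  · calc ‖Z.mkQL ∘L S‖ ≤ ‖S‖ := Z.norm_mkQL_comp_le S
      _ = ‖T‖ := by rw [hnorm, e.toLinearIsometry.norm_toContinuousLinearMap_comp]
  · calc ‖T‖ = ‖(Y.map Z.mkQ).mkQL ∘L Z.mkQL ∘L S‖ := by rw [hT_eq]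
      _ ≤ ‖Z.mkQL ∘L S‖ := Submodule.norm_mkQL_comp_le _ _

theorem stmt_11_general (X : Type*) [NormedAddCommGroup X] [NormedSpace ℝ X]
    (Y Z : Submodule ℝ X) (hZY : Z ≤ Y)
    (hZ : IsClosed (Z : Set X))
    (h : HasCQLP X Y) :
    HasCQLP (X ⧸ Z) ((Submodule.map Z.mkQ Y : Submodule ℝ (X ⧸ Z))) :=
  h.map_mkQ hZY

/-- Let Z ⊆ Y ⊆ X be closed subspaces with Y of finite codimension in X.
If (X,Y) has the CQLP, then (X/Z, Y/Z) has the CQLP. -/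
theorem stmt_11 (X : Type*) [NormedAddCommGroup X] [NormedSpace ℝ X] [CompleteSpace X]
    (Y Z : Submodule ℝ X) (hZY : Z ≤ Y)
    (hY : IsClosed (Y : Set X)) (hZ : IsClosed (Z : Set X))
    (hfin : FiniteDimensional ℝ (X ⧸ Y))
    (h : HasCQLP X Y) :
    HasCQLP (X ⧸ Z) ((Submodule.map Z.mkQ Y : Submodule ℝ (X ⧸ Z))) :=
  stmt_11_general X Y Z hZY hZ h
end
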